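/- For p an odd prime and any fixed nonzero value c in Z/pZ, the number of quaternions x over Z/pZ with n(x) = 0 and t(x) = c is p(p+1); in particular this count is independent of the choice of c ≠ 0. -/
import Mathlib

open Finset

section aux

variable {F : Type*} [Field F] [Fintype F] [DecidableEq F]

private lemma card_sqrts' (a : F) (hF : ringChar F ≠ 2) :
    ((univ.filter fun x : F => x ^ 2 = a).card : ℤ) = quadraticChar F a + 1 := by
  have := quadraticChar_card_sqrts hF a
  rwa [Set.toFinset_setOf] at this

private lemma sum_sq_subst (hF : ringChar F ≠ 2) (g : F → ℤ) :
    ∑ x : F, g (x ^ 2) = ∑ u : F, (quadraticChar F u + 1) * g u := by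
  rw [← Finset.sum_fiberwise' univ (fun x : F => x ^ 2) g]
  refine Finset.sum_congr rfl fun u _ => ?_
  rw [Finset.sum_const, nsmul_eq_mul]
  rw [← card_sqrts' u hF]

private lemma sum_char_sub_sq (hF : ringChar F ≠ 2) (t : F) :
    ∑ x : F, (quadraticChar F (t - x ^ 2) : ℤ) =
      if t = 0 then ((Fintype.card F : ℤ) - 1) * quadraticChar F (-1)
      else -quadraticChar F (-1) := by
  rw [sum_sq_subst hF (fun u => (quadraticChar F (t - u) : ℤ))]
  have h0 : ∑ u : F, (quadraticChar F (t - u) : ℤ) = 0 := by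
    rw [← quadraticChar_sum_zero hF]
    push_cast
    exact Fintype.sum_equiv (Equiv.subLeft t) _ _ (fun u => rfl)
  have hsplit : ∑ u : F, ((quadraticChar F u : ℤ) + 1) * quadraticChar F (t - u)
      = ∑ u : F, (quadraticChar F u : ℤ) * quadraticChar F (t - u) := by
    simp_rw [add_mul, one_mul, Finset.sum_add_distrib, h0, add_zero]
  rw [hsplit]
  by_cases ht : t = 0
  · subst ht
    rw [if_pos rfl]
    have h1 : ∀ u : F, (quadraticChar F u : ℤ) * quadraticChar F (0 - u)
        = quadraticChar F (-1) * (quadraticChar F u : ℤ) ^ 2 := by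
      intro u
      rw [zero_sub, show (-u : F) = -1 * u by ring, map_mul]
      push_cast
      ring
    rw [Finset.sum_congr rfl fun u _ => h1 u, ← Finset.mul_sum]
    have h2 : ∑ u : F, ((quadraticChar F u : ℤ)) ^ 2 = (Fintype.card F : ℤ) - 1 := by
      have h3 : ∀ u : F, ((quadraticChar F u : ℤ)) ^ 2 = if u = 0 then 0 else 1 := by
        intro u
        by_cases hu : u = 0
        · simp [hu]
        · have := quadraticChar_sq_one hu
          simp only [if_neg hu]
          exact_mod_cast this
      rw [Finset.sum_congr rfl fun u _ => h3 u, Finset.sum_ite, Finset.sum_const,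
        Finset.sum_const]
      rw [Finset.filter_ne' univ (0:F), Finset.card_erase_of_mem (mem_univ _), card_univ]
      have hpos : 0 < Fintype.card F := Fintype.card_pos
      simp only [smul_zero, zero_add, nsmul_eq_mul, mul_one]
      omega
    rw [h2]; ring
  · simp only [if_neg ht]
    have key : ∑ u : F, (quadraticChar F u : ℤ) * quadraticChar F (t - u)
        = jacobiSum (quadraticChar F) (quadraticChar F) := by
      rw [jacobiSum]
      have htinv : (t⁻¹ : F) ≠ 0 := inv_ne_zero ht
      refine Fintype.sum_equiv (Equiv.mulLeft₀ t⁻¹ htinv) _ _ (fun u => ?_)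
      simp only [Equiv.mulLeft₀_apply]
      rw [show (1 : F) - t⁻¹ * u = t⁻¹ * (t - u) by field_simp, map_mul, map_mul]
      have h2 : (quadraticChar F t⁻¹ : ℤ) * quadraticChar F t⁻¹ = 1 := by
        rw [← sq]; exact_mod_cast quadraticChar_sq_one htinv
      push_cast
      linear_combination (-(quadraticChar F u : ℤ) * quadraticChar F (t - u)) * h2
    rw [key]
    have hinv : jacobiSum (quadraticChar F) (quadraticChar F)
        = jacobiSum (quadraticChar F) (quadraticChar F)⁻¹ := by
      rw [(quadraticChar_isQuadratic F).inv]
    rw [hinv, jacobiSum_nontrivial_inv (quadraticChar_ne_one hF)]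

private lemma card_two_sq (hF : ringChar F ≠ 2) (s : F) :
    ((univ.filter fun v : F × F => v.1 ^ 2 + v.2 ^ 2 = s).card : ℤ) =
      (Fintype.card F : ℤ) + ∑ x : F, (quadraticChar F (s - x ^ 2) : ℤ) := by
  have h : (univ.filter fun v : F × F => v.1 ^ 2 + v.2 ^ 2 = s).card
      = ∑ x : F, (univ.filter fun y : F => y ^ 2 = s - x ^ 2).card := by
    rw [Finset.card_filter, ← Finset.univ_product_univ, Finset.sum_product]
    refine Finset.sum_congr rfl fun x _ => ?_
    rw [Finset.card_filter]
    refine Finset.sum_congr rfl fun y _ => ?_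
    refine if_congr ?_ rfl rfl
    rw [eq_sub_iff_add_eq, add_comm]
  rw [h]
  push_cast
  rw [Finset.sum_congr rfl fun x _ => card_sqrts' (s - x ^ 2) hF]
  rw [Finset.sum_add_distrib, Finset.sum_const, card_univ]
  push_cast
  ring

private lemma card_three_sq (hF : ringChar F ≠ 2) {a : F} (ha : a ≠ 0) :
    ((univ.filter fun v : F × F × F =>
        v.1 ^ 2 + v.2.1 ^ 2 + v.2.2 ^ 2 = -(a ^ 2)).card : ℤ) =
      (Fintype.card F : ℤ) * (Fintype.card F + 1) := by
  set b : F := -(a ^ 2) with hb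
  set q : ℤ := (Fintype.card F : ℤ) with hq
  have h : (univ.filter fun v : F × F × F =>
        v.1 ^ 2 + v.2.1 ^ 2 + v.2.2 ^ 2 = b).card
      = ∑ x : F, (univ.filter fun w : F × F => w.1 ^ 2 + w.2 ^ 2 = b - x ^ 2).card := by
    rw [Finset.card_filter, ← Finset.univ_product_univ, Finset.sum_product]
    refine Finset.sum_congr rfl fun x _ => ?_
    rw [Finset.card_filter]
    refine Finset.sum_congr rfl fun w _ => ?_
    refine if_congr ?_ rfl rfl
    rw [eq_sub_iff_add_eq]
    constructor <;> intro hh <;> [skip; skip] <;> linear_combination hh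
  rw [h]
  push_cast
  rw [Finset.sum_congr rfl fun x _ => card_two_sq hF (b - x ^ 2)]
  rw [Finset.sum_add_distrib, Finset.sum_const, card_univ, nsmul_eq_mul, mul_comm]
  have hinner : ∀ x : F, ∑ y : F, (quadraticChar F (b - x ^ 2 - y ^ 2) : ℤ)
      = if b - x ^ 2 = 0 then (q - 1) * quadraticChar F (-1) else -quadraticChar F (-1) := by
    intro x
    exact sum_char_sub_sq hF (b - x ^ 2)
  rw [Finset.sum_congr rfl fun x _ => hinner x]
  have hsplit2 : ∀ x : F, (if b - x ^ 2 = 0 then (q - 1) * (quadraticChar F (-1) : ℤ)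
      else -(quadraticChar F (-1) : ℤ))
      = (if b - x ^ 2 = 0 then q * (quadraticChar F (-1) : ℤ) else 0)
        + (-(quadraticChar F (-1) : ℤ)) := by
    intro x; split <;> ring
  rw [Finset.sum_congr rfl fun x _ => hsplit2 x, Finset.sum_add_distrib,
    ← Finset.sum_filter (fun x : F => b - x ^ 2 = 0) (fun _ => q * (quadraticChar F (-1) : ℤ)),
    Finset.sum_const, Finset.sum_const, card_univ,
    nsmul_eq_mul, nsmul_eq_mul]
  have hcard1 : ((univ.filter fun x : F => b - x ^ 2 = 0).card : ℤ)
      = quadraticChar F b + 1 := by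
    have hfe : (univ.filter fun x : F => b - x ^ 2 = 0)
        = univ.filter fun x : F => x ^ 2 = b := by
      ext x
      simp only [mem_filter, mem_univ, true_and, sub_eq_zero]
      exact eq_comm
    rw [hfe, card_sqrts' b hF]
  have hchib : (quadraticChar F b : ℤ) = quadraticChar F (-1) := by
    rw [hb, show (-(a^2) : F) = -1 * a ^ 2 by ring, map_mul]
    have := quadraticChar_sq_one' (F := F) ha
    rw [this]
    push_cast
    ring
  have hchisq : (quadraticChar F (-1) : ℤ) * quadraticChar F (-1) = 1 := by
    have hne : (-1 : F) ≠ 0 := by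
      intro hcon
      exact one_ne_zero (neg_eq_zero.mp hcon)
    have := quadraticChar_sq_one hne
    rw [← sq]
    exact_mod_cast this
  rw [hcard1, hchib]
  linear_combination (q : ℤ) * hchisq

end aux

theorem card_norm_zero_trace_fixed (p : ℕ) (hp : p.Prime) (hodd : Odd p) [Fact p.Prime]
    (c : ZMod p) (hc : c ≠ 0) :
    {x : Quaternion (ZMod p) |
      x.re ^ 2 + x.imI ^ 2 + x.imJ ^ 2 + x.imK ^ 2 = 0 ∧ 2 * x.re = c}.ncard = p * (p + 1) := by
  have hp2 : p ≠ 2 := by rintro rfl; simp [Nat.odd_iff] at hodd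
  have hchar : ringChar (ZMod p) ≠ 2 := by
    rw [ZMod.ringChar_zmod_n]; exact_mod_cast hp2
  have htwo : (2 : ZMod p) ≠ 0 := by
    have := Ring.two_ne_zero hchar
    simpa using this
  set r : ZMod p := (2 : ZMod p)⁻¹ * c with hr_def
  have h2r : (2 : ZMod p) * r = c := by
    rw [hr_def, ← mul_assoc, mul_inv_cancel₀ htwo, one_mul]
  have hr : r ≠ 0 := by
    intro h
    apply hc
    rw [← h2r, h, mul_zero]
  set S : Set (Quaternion (ZMod p)) := {x : Quaternion (ZMod p) |
      x.re ^ 2 + x.imI ^ 2 + x.imJ ^ 2 + x.imK ^ 2 = 0 ∧ 2 * x.re = c} with hS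
  set f : Quaternion (ZMod p) → ZMod p × ZMod p × ZMod p := fun x => (x.imI, x.imJ, x.imK) with hf
  have hre : ∀ x ∈ S, x.re = r := by
    intro x hx
    have := hx.2
    rw [← h2r] at this
    exact mul_left_cancel₀ htwo this
  have hinj : Set.InjOn f S := by
    intro x hx y hy hxy
    have h1 : x.re = y.re := by rw [hre x hx, hre y hy]
    have h2 : x.imI = y.imI := congrArg Prod.fst hxy
    have h3 : x.imJ = y.imJ := congrArg (Prod.fst ∘ Prod.snd) hxy
    have h4 : x.imK = y.imK := congrArg (Prod.snd ∘ Prod.snd) hxy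
    exact QuaternionAlgebra.ext h1 h2 h3 h4
  have himg : f '' S = {v : ZMod p × ZMod p × ZMod p | v.1 ^ 2 + v.2.1 ^ 2 + v.2.2 ^ 2 = -(r ^ 2)} := by
    ext v
    constructor
    · rintro ⟨x, hx, rfl⟩
      have h1 := hx.1
      rw [hre x hx] at h1
      simp only [Set.mem_setOf_eq, hf]
      linear_combination h1
    · intro hv
      refine ⟨⟨r, v.1, v.2.1, v.2.2⟩, ⟨?_, ?_⟩, rfl⟩
      · simp only [Set.mem_setOf_eq] at hv ⊢
        linear_combination hv
      · exact h2r
  have hT : {v : ZMod p × ZMod p × ZMod p | v.1 ^ 2 + v.2.1 ^ 2 + v.2.2 ^ 2 = -(r ^ 2)}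
      = ↑(Finset.univ.filter fun v : ZMod p × ZMod p × ZMod p =>
          v.1 ^ 2 + v.2.1 ^ 2 + v.2.2 ^ 2 = -(r ^ 2)) := by
    ext v; simp
  have hcount := card_three_sq (F := ZMod p) hchar hr
  rw [ZMod.card] at hcount
  have hcard : (Finset.univ.filter fun v : ZMod p × ZMod p × ZMod p =>
      v.1 ^ 2 + v.2.1 ^ 2 + v.2.2 ^ 2 = -(r ^ 2)).card = p * (p + 1) := by
    exact_mod_cast hcount
  calc S.ncard = (f '' S).ncard := (Set.ncard_image_of_injOn hinj).symm
    _ = p * (p + 1) := by rw [himg, hT, Set.ncard_coe_finset, hcard]
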